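/- arXiv:math/0509349 — 4 statements merged into one kernel-verified Lean document; each statement's English description precedes it below -/
import Mathlib

section
/- Let A be a finite alphabet and let Γ be a pre-automatic structure over A with data (L, L₌, (Lₐ)ₐ∈A). If σ : A⁺ → S and τ : A⁺ → T are interpretations of Γ with respect to semigroups S and T respectively, then S and T are isomorphic; more precisely, there exists a semigroup isomorphism ρ : S → T such that ρ(σ(w)) = τ(w) for every w ∈ L. -/
/-!
For `u, w ∈ L` and any word `v`, induction on `v` shows `(u, w) ∈ L_v ↔ σ (u * v) = σ w`.
Hence the relations `σ u = σ w` and `σ (u * v) = σ w` on `L` are read off `Γ` alone and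
agree for every interpretation, so `σ u ↦ τ u` is a well-defined multiplicative bijection.
-/

universe u v

/-- A pre-automatic structure over an alphabet `A`: a language `L` of nonempty words
(elements of the free semigroup `A⁺`), a relation `L₌ ⊆ L × L`, and for each letter
`a ∈ A` a relation `Lₐ ⊆ L × L`. -/
structure PreAutomaticStructure (A : Type u) where
  L : Set (FreeSemigroup A)
  Leq : Set (FreeSemigroup A × FreeSemigroup A)
  Lletter : A → Set (FreeSemigroup A × FreeSemigroup A)
  Leq_sub : Leq ⊆ L ×ˢ L
  Lletter_sub : ∀ a, Lletter a ⊆ L ×ˢ L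

/-- An interpretation of a pre-automatic structure with respect to a semigroup `S`:
a semigroup homomorphism `σ : A⁺ → S` such that (i) `σ(L) = S`, (ii) `L₌` captures
equality of representatives, (iii) `Lₐ` captures right multiplication by `a`. -/
structure IsInterpretation {A : Type u} {S : Type v} [Semigroup S]
    (Γ : PreAutomaticStructure A) (σ : FreeSemigroup A →ₙ* S) : Prop where
  surj : ⇑σ '' Γ.L = Set.univ
  eq_iff : ∀ u ∈ Γ.L, ∀ v ∈ Γ.L, ((u, v) ∈ Γ.Leq ↔ σ u = σ v)
  step_iff : ∀ (a : A), ∀ u ∈ Γ.L, ∀ v ∈ Γ.L,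
    ((u, v) ∈ Γ.Lletter a ↔ σ (u * FreeSemigroup.of a) = σ v)

/-- `σ` is consistent with the assignment of generators `ι : A → L`. -/
def ConsistentWith {A : Type u} {S : Type v} [Semigroup S] (Γ : PreAutomaticStructure A)
    (σ : FreeSemigroup A →ₙ* S) (ι : A → FreeSemigroup A) : Prop :=
  (∀ a, ι a ∈ Γ.L) ∧ ∀ a, σ (ι a) = σ (FreeSemigroup.of a)

/-- `ι : A → L` is an assignment of generators: some interpretation is consistent with it. -/
def IsAssignment {A : Type u} (Γ : PreAutomaticStructure A)
    (ι : A → FreeSemigroup A) : Prop :=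
  ∃ (T : Type v) (inst : Semigroup T)
    (τ : @MulHom (FreeSemigroup A) T _ inst.toMul),
    @IsInterpretation A T inst Γ τ ∧ @ConsistentWith A T inst Γ τ ι

/-- Composition of relations: `(u, v) ∈ R ∘ R'` iff `∃ x, (u, x) ∈ R ∧ (x, v) ∈ R'`. -/
def relComp {W : Type*} (R R' : Set (W × W)) : Set (W × W) :=
  {p | ∃ x, (p.1, x) ∈ R ∧ (x, p.2) ∈ R'}

/-- The inverse of a relation. -/
def relInv {W : Type*} (R : Set (W × W)) : Set (W × W) := {p | (p.2, p.1) ∈ R}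

/-- `L_w` for a word `w` given as a list of letters: `L_ε = L₌` and
`L_{a₁⋯aₙ} = L_{a₁} ∘ ⋯ ∘ L_{aₙ}`. -/
def PreAutomaticStructure.LwordList {A : Type u} (Γ : PreAutomaticStructure A) :
    List A → Set (FreeSemigroup A × FreeSemigroup A)
  | [] => Γ.Leq
  | [a] => Γ.Lletter a
  | a :: b :: rest => relComp (Γ.Lletter a) (Γ.LwordList (b :: rest))

/-- `L_w` for a nonempty word `w ∈ A⁺`. -/
def PreAutomaticStructure.Lword {A : Type u} (Γ : PreAutomaticStructure A)
    (w : FreeSemigroup A) : Set (FreeSemigroup A × FreeSemigroup A) :=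
  Γ.LwordList (w.head :: w.tail)

theorem exists_mulEquiv_of_image_eq_univ {W S T : Type*} [Mul W] [Mul S] [Mul T] {L : Set W}
    {σ : W →ₙ* S} {τ : W →ₙ* T} (hσ : σ '' L = Set.univ) (hτ : τ '' L = Set.univ)
    (heq : ∀ u ∈ L, ∀ w ∈ L, σ u = σ w ↔ τ u = τ w)
    (hmul : ∀ u ∈ L, ∀ v ∈ L, ∀ w ∈ L, σ (u * v) = σ w → τ (u * v) = τ w) :
    ∃ ρ : S ≃* T, ∀ w ∈ L, ρ (σ w) = τ w := by
  choose r hrL hr using fun s => (Set.eq_univ_iff_forall.mp hσ s : s ∈ σ '' L)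
  have hf : ∀ u ∈ L, τ (r (σ u)) = τ u := fun u hu => (heq _ (hrL _) u hu).mp (hr _)
  let f : S →ₙ* T :=
    { toFun := fun s => τ (r s)
      map_mul' := fun s₁ s₂ => by
        have h : σ (r s₁ * r s₂) = σ (r (s₁ * s₂)) := by rw [map_mul, hr, hr, hr]
        rw [← hmul _ (hrL s₁) _ (hrL s₂) _ (hrL _) h, map_mul] }
  have hbij : Function.Bijective f := by
    refine ⟨fun s₁ s₂ h => ?_, fun t => ?_⟩
    · rw [← hr s₁, ← hr s₂]
      exact (heq _ (hrL s₁) _ (hrL s₂)).mpr h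
    · obtain ⟨u, hu, rfl⟩ := (Set.eq_univ_iff_forall.mp hτ t : t ∈ τ '' L)
      exact ⟨σ u, hf u hu⟩
  exact ⟨MulEquiv.ofBijective f hbij, hf⟩

namespace PreAutomaticStructure

variable {A S T : Type*} [Semigroup S] [Semigroup T] {Γ : PreAutomaticStructure A}
  {σ : FreeSemigroup A →ₙ* S} {τ : FreeSemigroup A →ₙ* T}

theorem mem_LwordList_cons_iff (hσ : IsInterpretation Γ σ) (a : A) (rest : List A)
    {u w : FreeSemigroup A} (hu : u ∈ Γ.L) (hw : w ∈ Γ.L) :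
    (u, w) ∈ Γ.LwordList (a :: rest) ↔ σ (u * ⟨a, rest⟩) = σ w := by
  induction rest generalizing a u with
  | nil => exact hσ.step_iff a u hu w hw
  | cons b rest ih =>
    have hsplit : u * ⟨a, b :: rest⟩ = u * FreeSemigroup.of a * ⟨b, rest⟩ :=
      (mul_assoc u (FreeSemigroup.of a) ⟨b, rest⟩).symm
    -- surjectivity of `σ` on `L` provides the intermediate word of the composite relation
    obtain ⟨x, hx, hxa⟩ : σ (u * FreeSemigroup.of a) ∈ σ '' Γ.L := hσ.surj ▸ Set.mem_univ _
    constructor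
    · rintro ⟨y, hay, hyw⟩
      have hy : y ∈ Γ.L := (Γ.Lletter_sub a hay).2
      rw [hsplit, map_mul, (hσ.step_iff a u hu y hy).mp hay, ← map_mul, (ih b hy).mp hyw]
    · intro h
      refine ⟨x, (hσ.step_iff a u hu x hx).mpr hxa.symm, (ih b hx).mpr ?_⟩
      rw [map_mul, hxa, ← map_mul, ← hsplit, h]

theorem mem_Lword_iff (hσ : IsInterpretation Γ σ) (v : FreeSemigroup A)
    {u w : FreeSemigroup A} (hu : u ∈ Γ.L) (hw : w ∈ Γ.L) :
    (u, w) ∈ Γ.Lword v ↔ σ (u * v) = σ w :=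
  mem_LwordList_cons_iff hσ v.head v.tail hu hw

theorem map_mul_eq_iff_of_isInterpretation (hσ : IsInterpretation Γ σ)
    (hτ : IsInterpretation Γ τ) (v : FreeSemigroup A) {u w : FreeSemigroup A}
    (hu : u ∈ Γ.L) (hw : w ∈ Γ.L) : σ (u * v) = σ w ↔ τ (u * v) = τ w :=
  (mem_Lword_iff hσ v hu hw).symm.trans (mem_Lword_iff hτ v hu hw)

theorem map_eq_iff_of_isInterpretation (hσ : IsInterpretation Γ σ)
    (hτ : IsInterpretation Γ τ) {u w : FreeSemigroup A} (hu : u ∈ Γ.L) (hw : w ∈ Γ.L) :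
    σ u = σ w ↔ τ u = τ w :=
  (hσ.eq_iff u hu w hw).symm.trans (hτ.eq_iff u hu w hw)

end PreAutomaticStructure

theorem stmt_0_general {A : Type*} {S T : Type*} [Semigroup S] [Semigroup T]
    (Γ : PreAutomaticStructure A)
    (σ : FreeSemigroup A →ₙ* S) (τ : FreeSemigroup A →ₙ* T)
    (hσ : IsInterpretation Γ σ) (hτ : IsInterpretation Γ τ) :
    ∃ ρ : S ≃* T, ∀ w ∈ Γ.L, ρ (σ w) = τ w :=
  exists_mulEquiv_of_image_eq_univ hσ.surj hτ.surj
    (fun _ hu _ hw => PreAutomaticStructure.map_eq_iff_of_isInterpretation hσ hτ hu hw)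
    (fun _ hu v _ _ hw =>
      (PreAutomaticStructure.map_mul_eq_iff_of_isInterpretation hσ hτ v hu hw).mp)

/-- Two semigroups described by the same pre-automatic structure are isomorphic,
via an isomorphism compatible with the two interpretations on `L`. -/
theorem stmt_0 {A : Type*} [Finite A] {S T : Type*} [Semigroup S] [Semigroup T]
    (Γ : PreAutomaticStructure A)
    (σ : FreeSemigroup A →ₙ* S) (τ : FreeSemigroup A →ₙ* T)
    (hσ : IsInterpretation Γ σ) (hτ : IsInterpretation Γ τ) :
    ∃ ρ : S ≃* T, ∀ w ∈ Γ.L, ρ (σ w) = τ w :=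
  stmt_0_general Γ σ τ hσ hτ
end

section
/- Let Γ be a pre-automatic structure over a finite alphabet A and let ι : A → L be an assignment of generators for Γ. If σ : A⁺ → S and τ : A⁺ → T are interpretations of Γ that are both consistent with ι, then there exists a semigroup isomorphism ρ : S → T with ρ(σ(w)) = τ(w) for every word w ∈ A⁺; that is, an assignment of generators is consistent with a unique interpretation up to isomorphic permutation of the semigroup described. -/
universe u v

/-!
Every word `w` has a representative `u ∈ L` with `σ w = σ u` and `τ w = τ u` simultaneously:
the generators are represented by `ι`, and right multiplication by a letter is read off from
the same relation `Lₐ` in both interpretations. Since `L₌` decides equality of representatives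
for both, the surjections `σ` and `τ` have the same kernel, so `σ w ↦ τ w` is a well-defined
isomorphism.
-/

theorem exists_mulEquiv_apply_eq_of_surjective {M S T : Type*} [Mul M] [Mul S] [Mul T]
    (σ : M →ₙ* S) (τ : M →ₙ* T) (hσ : Function.Surjective σ) (hτ : Function.Surjective τ)
    (h : ∀ x y, σ x = σ y ↔ τ x = τ y) :
    ∃ ρ : S ≃* T, ∀ x, ρ (σ x) = τ x := by
  set g := Function.surjInv hσ
  have hg : ∀ s, σ (g s) = s := Function.surjInv_eq hσ
  have hτg : ∀ x, τ (g (σ x)) = τ x := fun x => (h _ _).1 (hg (σ x))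
  let f : S →ₙ* T :=
    { toFun := fun s => τ (g s)
      map_mul' := fun s t => by
        rw [← map_mul, ← h, map_mul, hg, hg, hg] }
  have hf : Function.Bijective f := by
    refine ⟨fun s s' hss' => ?_, fun t => ?_⟩
    · rw [← hg s, ← hg s']
      exact (h _ _).2 hss'
    · obtain ⟨x, rfl⟩ := hτ t
      exact ⟨σ x, hτg x⟩
  exact ⟨MulEquiv.ofBijective f hf, hτg⟩

namespace IsInterpretation

variable {A : Type*} {S T : Type*} [Semigroup S] [Semigroup T] {Γ : PreAutomaticStructure A}
  {σ : FreeSemigroup A →ₙ* S} {τ : FreeSemigroup A →ₙ* T}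

theorem exists_mem_L_map_eq (hσ : IsInterpretation Γ σ) (s : S) : ∃ u ∈ Γ.L, σ u = s :=
  Set.eq_univ_iff_forall.1 hσ.surj s

theorem surjective (hσ : IsInterpretation Γ σ) : Function.Surjective σ := fun s =>
  let ⟨u, _, hu⟩ := hσ.exists_mem_L_map_eq s
  ⟨u, hu⟩

theorem exists_mem_L_map_mul_eq (hσ : IsInterpretation Γ σ) (hτ : IsInterpretation Γ τ)
    (w : FreeSemigroup A) {u : FreeSemigroup A} (hu : u ∈ Γ.L) :
    ∃ u' ∈ Γ.L, σ (u * w) = σ u' ∧ τ (u * w) = τ u' := by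
  induction w using FreeSemigroup.recOnMul generalizing u with
  | ih1 a =>
    obtain ⟨u', hu', hσu'⟩ := hσ.exists_mem_L_map_eq (σ (u * FreeSemigroup.of a))
    have hstep : (u, u') ∈ Γ.Lletter a := (hσ.step_iff a u hu u' hu').2 hσu'.symm
    exact ⟨u', hu', hσu'.symm, (hτ.step_iff a u hu u' hu').1 hstep⟩
  | ih2 x y ihx ihy =>
    obtain ⟨u₁, hu₁, hσ₁, hτ₁⟩ := ihx hu
    obtain ⟨u', hu', hσ₂, hτ₂⟩ := ihy hu₁
    refine ⟨u', hu', ?_, ?_⟩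
    · rw [← mul_assoc, map_mul, hσ₁, ← map_mul, hσ₂]
    · rw [← mul_assoc, map_mul, hτ₁, ← map_mul, hτ₂]

theorem exists_mem_L_map_eq_map_eq (hσ : IsInterpretation Γ σ) (hτ : IsInterpretation Γ τ)
    {ι : A → FreeSemigroup A} (hσι : ConsistentWith Γ σ ι) (hτι : ConsistentWith Γ τ ι)
    (w : FreeSemigroup A) : ∃ u ∈ Γ.L, σ w = σ u ∧ τ w = τ u := by
  induction w using FreeSemigroup.recOnMul with
  | ih1 a => exact ⟨ι a, hσι.1 a, (hσι.2 a).symm, (hτι.2 a).symm⟩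
  | ih2 x y ihx _ =>
    obtain ⟨u, hu, hσu, hτu⟩ := ihx
    obtain ⟨u', hu', hσu', hτu'⟩ := hσ.exists_mem_L_map_mul_eq hτ y hu
    exact ⟨u', hu', by rw [map_mul, hσu, ← map_mul, hσu'],
      by rw [map_mul, hτu, ← map_mul, hτu']⟩

theorem map_eq_iff_map_eq (hσ : IsInterpretation Γ σ) (hτ : IsInterpretation Γ τ)
    {ι : A → FreeSemigroup A} (hσι : ConsistentWith Γ σ ι) (hτι : ConsistentWith Γ τ ι)
    (w w' : FreeSemigroup A) : σ w = σ w' ↔ τ w = τ w' := by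
  obtain ⟨u, hu, hσu, hτu⟩ := hσ.exists_mem_L_map_eq_map_eq hτ hσι hτι w
  obtain ⟨u', hu', hσu', hτu'⟩ := hσ.exists_mem_L_map_eq_map_eq hτ hσι hτι w'
  rw [hσu, hσu', hτu, hτu', ← hσ.eq_iff u hu u' hu', hτ.eq_iff u hu u' hu']

end IsInterpretation

theorem stmt_1_general {A : Type*} {S T : Type*} [Semigroup S] [Semigroup T]
    (Γ : PreAutomaticStructure A) (ι : A → FreeSemigroup A)
    (σ : FreeSemigroup A →ₙ* S) (τ : FreeSemigroup A →ₙ* T)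
    (hσ : IsInterpretation Γ σ) (hτ : IsInterpretation Γ τ)
    (hσι : ConsistentWith Γ σ ι) (hτι : ConsistentWith Γ τ ι) :
    ∃ ρ : S ≃* T, ∀ w : FreeSemigroup A, ρ (σ w) = τ w :=
  exists_mulEquiv_apply_eq_of_surjective σ τ hσ.surjective hτ.surjective
    (hσ.map_eq_iff_map_eq hτ hσι hτι)

/-- Two interpretations consistent with the same assignment of generators are related by
a semigroup isomorphism `ρ` with `ρ(σ(w)) = τ(w)` for every word `w ∈ A⁺`. -/
theorem stmt_1 {A : Type*} [Finite A] {S T : Type*} [Semigroup S] [Semigroup T]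
    (Γ : PreAutomaticStructure A) (ι : A → FreeSemigroup A)
    (σ : FreeSemigroup A →ₙ* S) (τ : FreeSemigroup A →ₙ* T)
    (hσ : IsInterpretation Γ σ) (hτ : IsInterpretation Γ τ)
    (hσι : ConsistentWith Γ σ ι) (hτι : ConsistentWith Γ τ ι) :
    ∃ ρ : S ≃* T, ∀ w : FreeSemigroup A, ρ (σ w) = τ w :=
  stmt_1_general Γ ι σ τ hσ hτ hσι hτι
end

section
/- Let Γ be a pre-automatic structure over a finite alphabet A admitting an interpretation σ : A⁺ → S into a left reductive semigroup S. Then any two assignments of generators ι, ι' for Γ are equivalent, i.e., (ι(a), ι'(a)) ∈ L₌ for every a ∈ A; consequently Γ admits a unique interpretation up to isomorphism of the semigroup described. -/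
universe u v

/-!
For `u, v ∈ L` and any word `w = a₁⋯aₙ`, whether an interpretation `τ` satisfies
`τ (u w) = τ v` is recorded by the relation `L_w = L_{a₁} ∘ ⋯ ∘ L_{aₙ}` of the structure alone, so
it is the same for all interpretations. Hence if `τ w = τ w'`, then for every `z ∈ L` both
`σ (z w)` and `σ (z w')` equal `σ v` for a `v ∈ L` with `τ v = τ (z w)`: the elements `σ w` and
`σ w'` are right translationally equivalent, and left reductivity gives `σ w = σ w'`.
Applied to `τ (ι a) = τ a` this shows `σ (ι a) = σ a` for every assignment `ι`, whence any two
assignments are equivalent. It also makes `τ w ↦ σ w` a well-defined homomorphism, which is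
bijective since both interpretations read equality on `L` off `L₌`.
-/

def IsLeftReductive (S : Type*) [Mul S] : Prop :=
  ∀ s t : S, (∀ x : S, x * s = x * t) → s = t

namespace PreAutomaticStructure

variable {A : Type*} (Γ : PreAutomaticStructure A)

lemma Lword_of_mul (a : A) (w : FreeSemigroup A) :
    Γ.Lword (FreeSemigroup.of a * w) = relComp (Γ.Lletter a) (Γ.Lword w) := rfl

end PreAutomaticStructure

namespace IsInterpretation

variable {A : Type*} {Γ : PreAutomaticStructure A}
  {S : Type*} [Semigroup S] {σ : FreeSemigroup A →ₙ* S}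
  {T : Type*} [Semigroup T] {τ : FreeSemigroup A →ₙ* T}

lemma exists_mem_L (hτ : IsInterpretation Γ τ) (t : T) : ∃ u ∈ Γ.L, τ u = t :=
  Set.eq_univ_iff_forall.mp hτ.surj t

lemma surjective_s5 (hτ : IsInterpretation Γ τ) : Function.Surjective τ :=
  fun t => (hτ.exists_mem_L t).imp fun _ h => h.2

lemma mem_Lword_iff (hτ : IsInterpretation Γ τ) (w : FreeSemigroup A) {u v : FreeSemigroup A}
    (hu : u ∈ Γ.L) (hv : v ∈ Γ.L) : (u, v) ∈ Γ.Lword w ↔ τ (u * w) = τ v := by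
  induction w generalizing u with
  | ih1 a => exact hτ.step_iff a u hu v hv
  | ih2 a w _ ih =>
    rw [Γ.Lword_of_mul]
    constructor
    · rintro ⟨x, hux, hxv⟩
      have hx : x ∈ Γ.L := (Γ.Lletter_sub a hux).2
      rw [← mul_assoc, map_mul, (hτ.step_iff a u hu x hx).mp hux, ← map_mul, (ih hx).mp hxv]
    · intro h
      obtain ⟨x, hx, hxa⟩ := hτ.exists_mem_L (τ (u * .of a))
      refine ⟨x, (hτ.step_iff a u hu x hx).mpr hxa.symm, (ih hx).mpr ?_⟩
      rw [map_mul, hxa, ← map_mul, mul_assoc, h]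

lemma map_mul_eq_iff_map_mul_eq (hσ : IsInterpretation Γ σ) (hτ : IsInterpretation Γ τ)
    (w : FreeSemigroup A) {u v : FreeSemigroup A} (hu : u ∈ Γ.L) (hv : v ∈ Γ.L) :
    σ (u * w) = σ v ↔ τ (u * w) = τ v :=
  (hσ.mem_Lword_iff w hu hv).symm.trans (hτ.mem_Lword_iff w hu hv)

lemma map_eq_iff_map_eq_s5 (hσ : IsInterpretation Γ σ) (hτ : IsInterpretation Γ τ)
    {u v : FreeSemigroup A} (hu : u ∈ Γ.L) (hv : v ∈ Γ.L) : σ u = σ v ↔ τ u = τ v :=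
  (hσ.eq_iff u hu v hv).symm.trans (hτ.eq_iff u hu v hv)

lemma map_eq_of_map_eq (hσ : IsInterpretation Γ σ) (hS : IsLeftReductive S)
    (hτ : IsInterpretation Γ τ) {w w' : FreeSemigroup A} (h : τ w = τ w') : σ w = σ w' := by
  refine hS _ _ fun x => ?_
  obtain ⟨z, hz, rfl⟩ := hσ.exists_mem_L x
  obtain ⟨v, hv, hzw⟩ := hτ.exists_mem_L (τ (z * w))
  have hσw : σ (z * w) = σ v :=
    (hσ.map_mul_eq_iff_map_mul_eq hτ w hz hv).mpr hzw.symm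
  have hσw' : σ (z * w') = σ v :=
    (hσ.map_mul_eq_iff_map_mul_eq hτ w' hz hv).mpr (by rw [map_mul, ← h, ← map_mul, hzw])
  rw [← map_mul, ← map_mul, hσw, hσw']

lemma exists_mulEquiv (hσ : IsInterpretation Γ σ) (hS : IsLeftReductive S)
    (hτ : IsInterpretation Γ τ) : ∃ ρ : T ≃* S, ∀ w, ρ (τ w) = σ w := by
  let r := Function.surjInv hτ.surjective_s5
  have hr : ∀ w, σ (r (τ w)) = σ w := fun w =>
    hσ.map_eq_of_map_eq hS hτ (Function.surjInv_eq hτ.surjective_s5 _)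
  let f : T →ₙ* S :=
    { toFun := fun t => σ (r t)
      map_mul' := by
        intro t t'
        obtain ⟨w, rfl⟩ := hτ.surjective_s5 t
        obtain ⟨w', rfl⟩ := hτ.surjective_s5 t'
        rw [← map_mul, hr, hr, hr, map_mul] }
  have hinj : Function.Injective f := by
    intro t t' h
    obtain ⟨u, hu, rfl⟩ := hτ.exists_mem_L t
    obtain ⟨u', hu', rfl⟩ := hτ.exists_mem_L t'
    exact (hσ.map_eq_iff_map_eq_s5 hτ hu hu').mp ((hr u).symm.trans (h.trans (hr u')))
  have hsurj : Function.Surjective f := by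
    intro s
    obtain ⟨u, rfl⟩ := hσ.surjective_s5 s
    exact ⟨τ u, hr u⟩
  exact ⟨MulEquiv.ofBijective f ⟨hinj, hsurj⟩, hr⟩

lemma exists_mulEquiv_of_isInterpretation (hσ : IsInterpretation Γ σ) (hS : IsLeftReductive S)
    (hτ : IsInterpretation Γ τ) {T' : Type*} [Semigroup T'] {τ' : FreeSemigroup A →ₙ* T'}
    (hτ' : IsInterpretation Γ τ') : ∃ ρ : T ≃* T', ∀ w, ρ (τ w) = τ' w := by
  obtain ⟨ρ, hρ⟩ := hσ.exists_mulEquiv hS hτ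
  obtain ⟨ρ', hρ'⟩ := hσ.exists_mulEquiv hS hτ'
  exact ⟨ρ.trans ρ'.symm, fun w => by rw [MulEquiv.trans_apply, hρ, ← hρ', ρ'.symm_apply_apply]⟩

lemma map_apply_eq_of_isAssignment (hσ : IsInterpretation Γ σ) (hS : IsLeftReductive S)
    {ι : A → FreeSemigroup A} (hι : IsAssignment Γ ι) (a : A) :
    σ (ι a) = σ (FreeSemigroup.of a) := by
  obtain ⟨_, _, τ, hτ, -, hιa⟩ := hι
  exact hσ.map_eq_of_map_eq hS hτ (hιa a)

end IsInterpretation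

lemma IsAssignment.apply_mem_L {A : Type*} {Γ : PreAutomaticStructure A}
    {ι : A → FreeSemigroup A} (hι : IsAssignment Γ ι) (a : A) : ι a ∈ Γ.L := by
  obtain ⟨_, _, _, _, hιL, -⟩ := hι
  exact hιL a

theorem stmt_5_general {A : Type*} {S : Type*} [Semigroup S]
    (Γ : PreAutomaticStructure A) (σ : FreeSemigroup A →ₙ* S)
    (hσ : IsInterpretation Γ σ)
    (hred : ∀ s t : S, (∀ x : S, x * s = x * t) → s = t)
    (ι ι' : A → FreeSemigroup A)
    (hι : IsAssignment Γ ι) (hι' : IsAssignment Γ ι') :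
    (∀ a, (ι a, ι' a) ∈ Γ.Leq) ∧
    (∀ (T T' : Type*) [Semigroup T] [Semigroup T']
      (τ : FreeSemigroup A →ₙ* T) (τ' : FreeSemigroup A →ₙ* T'),
      IsInterpretation Γ τ → IsInterpretation Γ τ' →
      ∃ ρ : T ≃* T', ∀ w : FreeSemigroup A, ρ (τ w) = τ' w) := by
  constructor
  · intro a
    rw [hσ.eq_iff _ (hι.apply_mem_L a) _ (hι'.apply_mem_L a),
      hσ.map_apply_eq_of_isAssignment hred hι a, hσ.map_apply_eq_of_isAssignment hred hι' a]
  · intro T T' _ _ τ τ' hτ hτ'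
    exact hσ.exists_mulEquiv_of_isInterpretation hred hτ hτ'

/-- If a pre-automatic structure admits an interpretation into a left reductive
semigroup, then any two assignments of generators are equivalent; consequently the
structure admits a unique interpretation up to isomorphism of the semigroup described. -/
theorem stmt_5 {A : Type*} [Finite A] {S : Type*} [Semigroup S]
    (Γ : PreAutomaticStructure A) (σ : FreeSemigroup A →ₙ* S)
    (hσ : IsInterpretation Γ σ)
    (hred : ∀ s t : S, (∀ x : S, x * s = x * t) → s = t)
    (ι ι' : A → FreeSemigroup A)
    (hι : IsAssignment Γ ι) (hι' : IsAssignment Γ ι') :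
    (∀ a, (ι a, ι' a) ∈ Γ.Leq) ∧
    (∀ (T T' : Type*) [Semigroup T] [Semigroup T']
      (τ : FreeSemigroup A →ₙ* T) (τ' : FreeSemigroup A →ₙ* T'),
      IsInterpretation Γ τ → IsInterpretation Γ τ' →
      ∃ ρ : T ≃* T', ∀ w : FreeSemigroup A, ρ (τ w) = τ' w) :=
  stmt_5_general Γ σ hσ hred ι ι' hι hι'
end

section
/- If a semigroup S admits an automatic structure, then the semigroup S⁰ obtained from S by adjoining a zero element also admits an automatic structure. -/
universe u v

/-- The word spelled by a nonempty free-semigroup element. -/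
def fsToList {A : Type} (w : FreeSemigroup A) : List A := w.head :: w.tail

/-- A language over `α` is regular if it is accepted by a DFA with finitely many states. -/
def IsRegularLang {α : Type} (L : Set (List α)) : Prop :=
  ∃ (Q : Type) (_ : Fintype Q) (M : DFA α Q), M.accepts = L

/-- The convolution `δ(u, v)`: pad the shorter word with the padding symbol (`none`)
on the right and read the two words letter-by-letter in parallel. -/
def conv {α : Type} (u v : List α) : List (Option α × Option α) :=
  List.zip (u.map some ++ List.replicate (v.length - u.length) (none : Option α))
           (v.map some ++ List.replicate (u.length - v.length) (none : Option α))

/-- A relation on words is synchronously rational if its convolution is regular. -/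
def SyncRational {α : Type} (R : Set (List α × List α)) : Prop :=
  IsRegularLang {w : List (Option α × Option α) | ∃ p ∈ R, w = conv p.1 p.2}

/-- A semigroup `S` admits an automatic structure: a finite alphabet `A`, a regular
language `L` of nonempty words over `A`, synchronously rational relations `L₌` and
`Lₐ` (for `a ∈ A`) contained in `L × L`, and an interpretation `σ : A⁺ → S`. -/
def IsAutomaticSemigroup (S : Type*) [Semigroup S] : Prop :=
  ∃ (A : Type) (_ : Fintype A) (Γ : PreAutomaticStructure A)
    (σ : FreeSemigroup A →ₙ* S),
    IsInterpretation Γ σ ∧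
    IsRegularLang (fsToList '' Γ.L) ∧
    SyncRational
      ((fun p : FreeSemigroup A × FreeSemigroup A => (fsToList p.1, fsToList p.2)) ''
        Γ.Leq) ∧
    ∀ a : A, SyncRational
      ((fun p : FreeSemigroup A × FreeSemigroup A => (fsToList p.1, fsToList p.2)) ''
        Γ.Lletter a)


/-! ### Auxiliary machinery for the main theorem -/

open Classical

noncomputable section RegAux

variable {α β γ : Type}

theorem DFA.evalFrom_cons' {Q} (M : DFA α Q) (s : Q) (x : α) (t : List α) :
    M.evalFrom s (x :: t) = M.evalFrom (M.step s x) t := rfl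

/-- Product DFA for unions. -/
def unionDFA {Q1 Q2} (M1 : DFA α Q1) (M2 : DFA α Q2) : DFA α (Q1 × Q2) where
  step q a := (M1.step q.1 a, M2.step q.2 a)
  start := (M1.start, M2.start)
  accept := {q | q.1 ∈ M1.accept ∨ q.2 ∈ M2.accept}

theorem unionDFA_evalFrom {Q1 Q2} (M1 : DFA α Q1) (M2 : DFA α Q2) (w : List α) :
    ∀ q1 q2, (unionDFA M1 M2).evalFrom (q1, q2) w = (M1.evalFrom q1 w, M2.evalFrom q2 w) := by
  induction w with
  | nil => intro q1 q2; rfl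
  | cons x t ih => intro q1 q2; rw [DFA.evalFrom_cons']; exact ih _ _

theorem IsRegularLang.union {L1 L2 : Set (List α)} (h1 : IsRegularLang L1)
    (h2 : IsRegularLang L2) : IsRegularLang (L1 ∪ L2) := by
  obtain ⟨Q1, i1, M1, rfl⟩ := h1
  obtain ⟨Q2, i2, M2, rfl⟩ := h2
  refine ⟨Q1 × Q2, @instFintypeProd _ _ i1 i2, unionDFA M1 M2, ?_⟩
  ext w
  have h2 : (unionDFA M1 M2).eval w = (M1.eval w, M2.eval w) := unionDFA_evalFrom M1 M2 w _ _
  change (unionDFA M1 M2).eval w ∈ (unionDFA M1 M2).accept ↔ M1.eval w ∈ M1.accept ∨ M2.eval w ∈ M2.accept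
  rw [h2]
  exact Iff.rfl

/-- DFA for the singleton language `{[c]}`. -/
def singletonDFA (c : α) : DFA α (Fin 3) where
  step q x := if q = 0 ∧ x = c then 1 else 2
  start := 0
  accept := {1}

theorem singletonDFA_dead (c : α) (w : List α) : (singletonDFA c).evalFrom 2 w = 2 := by
  induction w with
  | nil => rfl
  | cons x t ih => rw [DFA.evalFrom_cons']; simpa [singletonDFA] using ih

theorem singletonDFA_one (c : α) (y : α) (t : List α) :
    (singletonDFA c).evalFrom 1 (y :: t) = 2 := by
  rw [DFA.evalFrom_cons']
  have : (singletonDFA c).step 1 y = 2 := by simp [singletonDFA]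
  rw [this, singletonDFA_dead]

theorem IsRegularLang.singleton (c : α) : IsRegularLang ({[c]} : Set (List α)) := by
  refine ⟨Fin 3, inferInstance, singletonDFA c, ?_⟩
  ext w
  rw [DFA.mem_accepts]
  constructor
  · intro h
    match w with
    | [] => simp [singletonDFA, DFA.eval] at h
    | x :: t =>
      have hst : (singletonDFA c).eval (x :: t) =
          (singletonDFA c).evalFrom ((singletonDFA c).step 0 x) t := rfl
      by_cases hx : x = c
      · have h1 : (singletonDFA c).step 0 x = 1 := by simp [singletonDFA, hx]
        match t with
        | [] => exact hx ▸ (Set.mem_singleton _)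
        | y :: t' =>
          rw [hst, h1, singletonDFA_one] at h
          simp [singletonDFA] at h
      · have h1 : (singletonDFA c).step 0 x = 2 := by simp [singletonDFA, hx]
        rw [hst, h1, singletonDFA_dead] at h
        simp [singletonDFA] at h
  · rintro rfl
    have : (singletonDFA c).eval [c] = 1 := by simp [DFA.eval, singletonDFA]
    rw [this]
    exact rfl

/-- DFA recognizing the image of a language under an injective letter-to-letter map. -/
def mapDFA {Q} (f : β → γ) (M : DFA β Q) : DFA γ (Option Q) where
  step q c := q.bind fun q' => (Function.partialInv f c).map (M.step q')
  start := some M.start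
  accept := some '' M.accept

theorem mapDFA_dead {Q} (f : β → γ) (M : DFA β Q) (w : List γ) :
    (mapDFA f M).evalFrom none w = none := by
  induction w with
  | nil => rfl
  | cons x t ih => rw [DFA.evalFrom_cons']; simpa [mapDFA] using ih

theorem mapDFA_evalFrom {Q} {f : β → γ} (hf : Function.Injective f) (M : DFA β Q)
    (u : List β) : ∀ q, (mapDFA f M).evalFrom (some q) (u.map f) = some (M.evalFrom q u) := by
  induction u with
  | nil => intro q; rfl
  | cons x t ih =>
    intro q
    rw [List.map_cons, DFA.evalFrom_cons']
    have : (mapDFA f M).step (some q) (f x) = some (M.step q x) := by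
      simp [mapDFA, Function.partialInv_left hf]
    rw [this, ih]
    rfl

theorem mapDFA_evalFrom_some {Q} {f : β → γ} (hf : Function.Injective f) (M : DFA β Q)
    (w : List γ) :
    ∀ q q', (mapDFA f M).evalFrom (some q) w = some q' →
      ∃ u : List β, w = u.map f ∧ M.evalFrom q u = q' := by
  induction w with
  | nil =>
    intro q q' h
    exact ⟨[], rfl, by simpa using (Option.some_inj.mp h)⟩
  | cons x t ih =>
    intro q q' h
    rw [DFA.evalFrom_cons'] at h
    rcases hs : (mapDFA f M).step (some q) x with _ | q2
    · rw [hs, mapDFA_dead] at h; exact absurd h (by simp)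
    · rw [hs] at h
      obtain ⟨u, rfl, hu⟩ := ih _ _ h
      rcases hp : Function.partialInv f x with _ | b
      · rw [show (mapDFA f M).step (some q) x = none by simp [mapDFA, hp]] at hs
        exact absurd hs (by simp)
      · have hb : f b = x := (Function.partialInv_of_injective hf b x).mp hp
        have hq2 : q2 = M.step q b := by
          have h3 : (mapDFA f M).step (some q) x = some (M.step q b) := by simp [mapDFA, hp]
          rw [h3] at hs; exact (Option.some_inj.mp hs).symm
        exact ⟨b :: u, by rw [List.map_cons, hb], by rw [DFA.evalFrom_cons', ← hq2, hu]⟩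

theorem IsRegularLang.mapImage {f : β → γ} (hf : Function.Injective f)
    {K : Set (List β)} (hK : IsRegularLang K) : IsRegularLang (List.map f '' K) := by
  obtain ⟨Q, iQ, M, rfl⟩ := hK
  refine ⟨Option Q, @instFintypeOption _ iQ, mapDFA f M, ?_⟩
  ext w
  rw [DFA.mem_accepts]
  constructor
  · intro h
    obtain ⟨q', hq', he⟩ : ∃ q' ∈ M.accept, (mapDFA f M).eval w = some q' := by
      rcases h with ⟨q', hq', he⟩; exact ⟨q', hq', he.symm⟩
    obtain ⟨u, rfl, hu⟩ := mapDFA_evalFrom_some hf M w M.start q' he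
    exact ⟨u, by change M.evalFrom M.start u ∈ M.accept; rwa [hu], rfl⟩
  · rintro ⟨u, hu, rfl⟩
    have := mapDFA_evalFrom hf M u M.start
    change M.eval u ∈ M.accept at hu
    exact ⟨M.eval u, hu, ((mapDFA_evalFrom hf M u M.start)).symm⟩


/-- DFA recognizing `{conv u [c] | u ∈ M.accepts, u ≠ []}`. -/
def convOneDFA {Q} (c : β) (M : DFA β Q) : DFA (Option β × Option β) (Option (Option Q)) where
  step q x :=
    match q, x with
    | some none, (some b, y) => if y = some c then some (some (M.step M.start b)) else none
    | some (some q'), (some b, none) => some (some (M.step q' b))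
    | _, _ => none
  start := some none
  accept := {s | ∃ q ∈ M.accept, s = some (some q)}

theorem convOneDFA_dead {Q} (c : β) (M : DFA β Q) (w : List (Option β × Option β)) :
    (convOneDFA c M).evalFrom none w = none := by
  induction w with
  | nil => rfl
  | cons x t ih => rw [DFA.evalFrom_cons']; simpa [convOneDFA] using ih

theorem convOneDFA_run {Q} (c : β) (M : DFA β Q) (t : List β) :
    ∀ q, (convOneDFA c M).evalFrom (some (some q))
        (t.map (fun b => ((some b : Option β), (none : Option β))))
      = some (some (M.evalFrom q t)) := by
  induction t with
  | nil => intro q; rfl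
  | cons b t ih =>
    intro q
    rw [List.map_cons, DFA.evalFrom_cons']
    have h1 : (convOneDFA c M).step (some (some q)) (some b, none)
        = some (some (M.step q b)) := rfl
    rw [h1, ih]
    rfl

theorem convOneDFA_run_inv {Q} (c : β) (M : DFA β Q) (w : List (Option β × Option β)) :
    ∀ q q', (convOneDFA c M).evalFrom (some (some q)) w = some (some q') →
      ∃ t : List β, w = t.map (fun b => ((some b : Option β), (none : Option β)))
        ∧ M.evalFrom q t = q' := by
  induction w with
  | nil =>
    intro q q' h
    exact ⟨[], rfl, by simpa using h⟩
  | cons x t ih =>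
    intro q q' h
    rw [DFA.evalFrom_cons'] at h
    rcases x with ⟨x1, x2⟩
    rcases x1 with _ | b
    · rw [show (convOneDFA c M).step (some (some q)) (none, x2) = none from rfl,
        convOneDFA_dead] at h
      exact absurd h (by simp)
    · rcases x2 with _ | d
      · rw [show (convOneDFA c M).step (some (some q)) (some b, none)
            = some (some (M.step q b)) from rfl] at h
        obtain ⟨u, rfl, hu⟩ := ih _ _ h
        exact ⟨b :: u, by simp, by rw [DFA.evalFrom_cons']; exact hu⟩
      · rw [show (convOneDFA c M).step (some (some q)) (some b, some d) = none from rfl,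
          convOneDFA_dead] at h
        exact absurd h (by simp)

theorem zip_map_replicate_none (t : List β) :
    List.zip (t.map some) (List.replicate t.length (none : Option β))
      = t.map (fun b => ((some b : Option β), (none : Option β))) := by
  induction t with
  | nil => rfl
  | cons b t ih => simp [List.replicate_succ, ih]

theorem conv_cons_single (a c : β) (t : List β) :
    conv (a :: t) [c]
      = ((some a : Option β), (some c : Option β))
          :: t.map (fun b => ((some b : Option β), (none : Option β))) := by
  simp [conv, List.zip_cons_cons, zip_map_replicate_none, List.replicate_succ]

theorem IsRegularLang.convOne {K : Set (List β)} (hK : IsRegularLang K)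
    (hne : ∀ u ∈ K, u ≠ []) (c : β) :
    IsRegularLang {w | ∃ u ∈ K, w = conv u [c]} := by
  obtain ⟨Q, iQ, M, rfl⟩ := hK
  refine ⟨Option (Option Q), @instFintypeOption _ (@instFintypeOption _ iQ), convOneDFA c M, ?_⟩
  ext w
  rw [DFA.mem_accepts]
  constructor
  · intro h
    obtain ⟨q', hq', he⟩ := h
    match w with
    | [] => simp [convOneDFA, DFA.eval] at he
    | x :: t =>
      have hst : (convOneDFA c M).eval (x :: t)
          = (convOneDFA c M).evalFrom ((convOneDFA c M).step (some none) x) t := rfl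
      rw [hst] at he
      rcases x with ⟨x1, x2⟩
      rcases x1 with _ | b
      · rw [show (convOneDFA c M).step (some none) (none, x2) = none from rfl,
          convOneDFA_dead] at he
        exact absurd he (by simp)
      · by_cases hd : x2 = some c
        · subst hd
          rw [show (convOneDFA c M).step (some none) (some b, some c)
              = some (some (M.step M.start b)) from by simp [convOneDFA]] at he
          obtain ⟨u, rfl, hu⟩ := convOneDFA_run_inv c M t _ _ he
          refine ⟨b :: u, ?_, ?_⟩
          · change M.eval (b :: u) ∈ M.accept
            rw [show M.eval (b :: u) = M.evalFrom (M.step M.start b) u from rfl, hu]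
            exact hq'
          · rw [conv_cons_single]
        · rw [show (convOneDFA c M).step (some none) (some b, x2) = none from by
            simp [convOneDFA, hd], convOneDFA_dead] at he
          exact absurd he (by simp)
  · rintro ⟨u, hu, rfl⟩
    match u, hne u hu with
    | b :: t, _ =>
      rw [conv_cons_single]
      have hst : (convOneDFA c M).eval ((some b, some c)
            :: t.map (fun x => ((some x : Option β), (none : Option β))))
          = (convOneDFA c M).evalFrom
              ((convOneDFA c M).step (some none) (some b, some c)) _ := rfl
      rw [hst, show (convOneDFA c M).step (some none) (some b, some c)
          = some (some (M.step M.start b)) from by simp [convOneDFA], convOneDFA_run]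
      exact ⟨M.evalFrom (M.step M.start b) t, hu, rfl⟩

theorem conv_map {f : β → γ} (u v : List β) :
    conv (u.map f) (v.map f)
      = (conv u v).map (Prod.map (Option.map f) (Option.map f)) := by
  have h1 : ∀ (w : List β) (n : ℕ),
      List.map some (w.map f) ++ List.replicate n (none : Option γ)
      = (List.map some w ++ List.replicate n (none : Option β)).map (Option.map f) := by
    intro w n
    rw [List.map_append, List.map_map, List.map_map, List.map_replicate]
    rfl
  simp only [conv, List.length_map, h1, List.zip_map]

end RegAux

section FSAux

variable {α β : Type}

theorem fsToList_of (a : α) : fsToList (FreeSemigroup.of a) = [a] := rfl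

theorem fsToList_mul (x y : FreeSemigroup α) :
    fsToList (x * y) = fsToList x ++ fsToList y := rfl

theorem fsToList_map (f : α → β) (x : FreeSemigroup α) :
    fsToList (FreeSemigroup.map f x) = (fsToList x).map f := by
  refine FreeSemigroup.recOnMul x (fun a => rfl) (fun a y _ ihy => ?_)
  rw [map_mul, fsToList_mul, fsToList_mul, List.map_append, ihy]
  rfl

theorem fsToList_injective : Function.Injective (fsToList (A := α)) := by
  intro x y h
  rcases x with ⟨xh, xt⟩
  rcases y with ⟨yh, yt⟩
  simp only [fsToList, List.cons.injEq] at h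
  exact FreeSemigroup.ext h.1 h.2

theorem fsToList_ne_nil (x : FreeSemigroup α) : fsToList x ≠ [] := by
  simp [fsToList]

theorem fsMap_injective {f : α → β} (hf : Function.Injective f) :
    Function.Injective (FreeSemigroup.map f) := by
  intro x y hxy
  apply fsToList_injective
  apply List.map_injective_iff.mpr hf
  rw [← fsToList_map, ← fsToList_map, hxy]

end FSAux


/-- If a semigroup `S` admits an automatic structure, then the semigroup `S⁰` obtained
from `S` by adjoining a zero element (`WithZero S`) also admits an automatic structure. -/
theorem stmt_19 {S : Type} [Semigroup S] (h : IsAutomaticSemigroup S) :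
    IsAutomaticSemigroup (WithZero S) := by
  classical
  obtain ⟨A, iA, Γ, σ, hint, hregL, hsyncEq, hsyncLet⟩ := h
  haveI := iA
  let emb : FreeSemigroup A →ₙ* FreeSemigroup (Option A) := FreeSemigroup.map some
  let z : FreeSemigroup (Option A) := FreeSemigroup.of (none : Option A)
  have embInj : Function.Injective ⇑emb := fsMap_injective (Option.some_injective A)
  have hembz : ∀ w : FreeSemigroup A, emb w ≠ z := by
    intro w hw
    have h2 := congrArg fsToList hw
    rw [fsToList_map] at h2
    rcases w with ⟨wh, wt⟩
    simp [fsToList, z] at h2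
  let L' : Set (FreeSemigroup (Option A)) := ⇑emb '' Γ.L ∪ {z}
  have hzL' : z ∈ L' := Or.inr rfl
  let Γ' : PreAutomaticStructure (Option A) :=
    { L := L'
      Leq := Prod.map (⇑emb) (⇑emb) '' Γ.Leq ∪ {(z, z)}
      Lletter := fun o => Option.elim o (L' ×ˢ ({z} : Set (FreeSemigroup (Option A))))
        (fun a => Prod.map (⇑emb) (⇑emb) '' Γ.Lletter a ∪ {(z, z)})
      Leq_sub := by
        rintro ⟨u, v⟩ (⟨⟨p, q⟩, hpq, heq⟩ | heq)
        · obtain ⟨hp, hq⟩ := Γ.Leq_sub hpq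
          cases heq
          exact ⟨Or.inl ⟨p, hp, rfl⟩, Or.inl ⟨q, hq, rfl⟩⟩
        · cases heq
          exact ⟨hzL', hzL'⟩
      Lletter_sub := by
        rintro (_ | a)
        · rintro ⟨u, v⟩ ⟨hu, hv⟩
          obtain rfl : v = z := hv
          exact ⟨hu, hzL'⟩
        · rintro ⟨u, v⟩ (⟨⟨p, q⟩, hpq, heq⟩ | heq)
          · obtain ⟨hp, hq⟩ := (Γ.Lletter_sub a) hpq
            cases heq
            exact ⟨Or.inl ⟨p, hp, rfl⟩, Or.inl ⟨q, hq, rfl⟩⟩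
          · cases heq
            exact ⟨hzL', hzL'⟩ }
  let f0 : Option A → WithZero S :=
    fun o => Option.elim o 0 (fun a => (σ (FreeSemigroup.of a) : WithZero S))
  let σ' : FreeSemigroup (Option A) →ₙ* WithZero S := FreeSemigroup.lift f0
  let coeHom : S →ₙ* WithZero S :=
    ⟨fun s => (s : WithZero S), fun a b => by exact_mod_cast rfl⟩
  have hcomm : ∀ w, σ' (emb w) = (σ w : WithZero S) := by
    have hc : σ'.comp emb = coeHom.comp σ := FreeSemigroup.hom_ext (funext fun a => by
      simp [σ', emb, f0, coeHom, FreeSemigroup.lift_of]; rfl)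
    intro w
    exact DFunLike.congr_fun hc w
  have hσz : σ' z = (0 : WithZero S) := rfl
  have hne0 : ∀ w, σ' (emb w) ≠ 0 := fun w => by
    rw [hcomm]; exact WithZero.coe_ne_zero
  have hzero : ∀ v, σ' (v * z) = 0 := fun v => by
    rw [map_mul, hσz, mul_zero]
  have hofsome : ∀ a : A, FreeSemigroup.of (some a) = emb (FreeSemigroup.of a) := fun a => rfl
  -- interpretation
  have hinterp : IsInterpretation Γ' σ' := by
    constructor
    · rw [Set.eq_univ_iff_forall]
      intro x
      rcases Classical.em (x = 0) with rfl | hx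
      · exact ⟨z, hzL', hσz⟩
      · obtain ⟨s, rfl⟩ := WithZero.ne_zero_iff_exists.mp hx
        have hs : s ∈ ⇑σ '' Γ.L := by rw [hint.surj]; trivial
        obtain ⟨w, hw, rfl⟩ := hs
        exact ⟨emb w, Or.inl ⟨w, hw, rfl⟩, hcomm w⟩
    · rintro u hu v hv
      rcases hu with ⟨u0, hu0, rfl⟩ | rfl
      · rcases hv with ⟨v0, hv0, rfl⟩ | rfl
        · constructor
          · rintro (⟨⟨p, q⟩, hpq, heq⟩ | heq)
            · cases embInj (congrArg Prod.fst heq)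
              cases embInj (congrArg Prod.snd heq)
              rw [hcomm, hcomm]
              exact WithZero.coe_inj.mpr ((hint.eq_iff _ hu0 _ hv0).mp hpq)
            · exact absurd (congrArg Prod.fst heq) (hembz u0)
          · intro hσ
            rw [hcomm, hcomm] at hσ
            exact Or.inl ⟨(u0, v0),
              (hint.eq_iff _ hu0 _ hv0).mpr (WithZero.coe_inj.mp hσ), rfl⟩
        · constructor
          · rintro (⟨⟨p, q⟩, hpq, heq⟩ | heq)
            · exact absurd (congrArg Prod.snd heq) (hembz q)
            · exact absurd (congrArg Prod.fst heq) (hembz u0)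
          · intro hσ
            rw [hcomm, hσz] at hσ
            exact absurd hσ WithZero.coe_ne_zero
      · rcases hv with ⟨v0, hv0, rfl⟩ | rfl
        · constructor
          · rintro (⟨⟨p, q⟩, hpq, heq⟩ | heq)
            · exact absurd (congrArg Prod.fst heq) (hembz p)
            · exact absurd (congrArg Prod.snd heq) (hembz v0)
          · intro hσ
            rw [hcomm, hσz] at hσ
            exact absurd hσ.symm WithZero.coe_ne_zero
        · exact ⟨fun _ => rfl, fun _ => Or.inr rfl⟩
    · rintro (_ | a) u hu v hv
      · -- letter none
        have hmulz : σ' (u * FreeSemigroup.of (none : Option A)) = 0 := hzero u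
        constructor
        · rintro ⟨-, hv2⟩
          obtain rfl : v = z := hv2
          rw [hmulz, hσz]
        · intro hσ
          refine ⟨hu, ?_⟩
          rcases hv with ⟨v0, hv0, rfl⟩ | rfl
          · rw [hmulz] at hσ
            exact absurd hσ.symm (hne0 v0)
          · rfl
      · -- letter (some a)
        have hstep : ∀ w : FreeSemigroup A,
            σ' (emb w * FreeSemigroup.of (some a)) = (σ (w * FreeSemigroup.of a) : WithZero S) := by
          intro w
          rw [hofsome, ← map_mul, hcomm]
        rcases hu with ⟨u0, hu0, rfl⟩ | rfl
        · rcases hv with ⟨v0, hv0, rfl⟩ | rfl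
          · constructor
            · rintro (⟨⟨p, q⟩, hpq, heq⟩ | heq)
              · cases embInj (congrArg Prod.fst heq)
                cases embInj (congrArg Prod.snd heq)
                rw [hstep, hcomm]
                exact WithZero.coe_inj.mpr ((hint.step_iff a _ hu0 _ hv0).mp hpq)
              · exact absurd (congrArg Prod.fst heq) (hembz u0)
            · intro hσ
              rw [hstep, hcomm] at hσ
              exact Or.inl ⟨(u0, v0),
                (hint.step_iff a _ hu0 _ hv0).mpr (WithZero.coe_inj.mp hσ), rfl⟩
          · constructor
            · rintro (⟨⟨p, q⟩, hpq, heq⟩ | heq)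
              · exact absurd (congrArg Prod.snd heq) (hembz q)
              · exact absurd (congrArg Prod.fst heq) (hembz u0)
            · intro hσ
              rw [hstep, hσz] at hσ
              exact absurd hσ WithZero.coe_ne_zero
        · rcases hv with ⟨v0, hv0, rfl⟩ | rfl
          · constructor
            · rintro (⟨⟨p, q⟩, hpq, heq⟩ | heq)
              · exact absurd (congrArg Prod.fst heq) (hembz p)
              · exact absurd (congrArg Prod.snd heq) (hembz v0)
            · intro hσ
              have hz0 : σ' (z * FreeSemigroup.of (some a)) = 0 := by
                rw [map_mul, hσz, zero_mul]
              rw [hz0, hcomm] at hσ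
              exact absurd hσ.symm WithZero.coe_ne_zero
          · constructor
            · intro _
              rw [map_mul, hσz, zero_mul]
            · intro _
              exact Or.inr rfl
  -- regularity of L'
  have hK : fsToList '' Γ'.L
      = (List.map some) '' (fsToList '' Γ.L) ∪ ({[(none : Option A)]} : Set _) := by
    show fsToList '' (⇑emb '' Γ.L ∪ {z}) = _
    rw [Set.image_union, Set.image_singleton]
    congr 1
    rw [Set.image_image, Set.image_image]
    exact Set.image_congr' (fun w => fsToList_map some w)
  have hregL' : IsRegularLang (fsToList '' Γ'.L) := by
    rw [hK]
    exact (hregL.mapImage (Option.some_injective A)).union (IsRegularLang.singleton _)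
  -- sync rationality transfer
  have hg : Function.Injective
      (Prod.map (Option.map (some : A → Option A)) (Option.map (some : A → Option A))) :=
    Function.Injective.prodMap (Option.map_injective (Option.some_injective A))
      (Option.map_injective (Option.some_injective A))
  have key : ∀ R : Set (FreeSemigroup A × FreeSemigroup A),
      SyncRational ((fun p : FreeSemigroup A × FreeSemigroup A =>
        (fsToList p.1, fsToList p.2)) '' R) →
      SyncRational ((fun p : FreeSemigroup (Option A) × FreeSemigroup (Option A) =>
        (fsToList p.1, fsToList p.2)) '' (Prod.map (⇑emb) (⇑emb) '' R ∪ {(z, z)})) := by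
    intro R hR
    unfold SyncRational at hR ⊢
    have hset : {w | ∃ p ∈ (fun p : FreeSemigroup (Option A) × FreeSemigroup (Option A) =>
          (fsToList p.1, fsToList p.2)) '' (Prod.map (⇑emb) (⇑emb) '' R ∪ {(z, z)}),
            w = conv p.1 p.2}
        = (List.map (Prod.map (Option.map some) (Option.map some))) ''
            {w | ∃ p ∈ (fun p : FreeSemigroup A × FreeSemigroup A =>
              (fsToList p.1, fsToList p.2)) '' R, w = conv p.1 p.2}
          ∪ {[((some (none : Option A) : Option (Option A)),
              (some (none : Option A) : Option (Option A)))]} := by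
      ext w
      constructor
      · rintro ⟨p, hp, rfl⟩
        rcases hp with ⟨p', hp', rfl⟩
        rcases hp' with ⟨q, hq, rfl⟩ | hq
        · left
          refine ⟨conv (fsToList q.1) (fsToList q.2),
            ⟨(fsToList q.1, fsToList q.2), ⟨q, hq, rfl⟩, rfl⟩, ?_⟩
          show _ = conv (fsToList (emb q.1)) (fsToList (emb q.2))
          rw [fsToList_map, fsToList_map, conv_map]
        · cases hq
          right
          rfl
      · rintro (⟨w0, ⟨p, ⟨q, hq, rfl⟩, rfl⟩, rfl⟩ | hw)
        · refine ⟨(fsToList (emb q.1), fsToList (emb q.2)),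
            ⟨Prod.map (⇑emb) (⇑emb) q, Or.inl ⟨q, hq, rfl⟩, rfl⟩, ?_⟩
          show List.map _ (conv (fsToList q.1) (fsToList q.2)) = _
          rw [fsToList_map, fsToList_map, conv_map]
        · cases hw
          exact ⟨([(none : Option A)], [(none : Option A)]), ⟨(z, z), Or.inr rfl, rfl⟩, rfl⟩
    rw [hset]
    exact (hR.mapImage hg).union (IsRegularLang.singleton _)
  -- sync rationality of the zero-letter relation
  have hzsync : SyncRational ((fun p : FreeSemigroup (Option A) × FreeSemigroup (Option A) =>
      (fsToList p.1, fsToList p.2)) '' (L' ×ˢ ({z} : Set (FreeSemigroup (Option A))))) := by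
    unfold SyncRational
    have hset : {w | ∃ p ∈ (fun p : FreeSemigroup (Option A) × FreeSemigroup (Option A) =>
          (fsToList p.1, fsToList p.2)) '' (L' ×ˢ ({z} : Set (FreeSemigroup (Option A)))),
            w = conv p.1 p.2}
        = {w | ∃ u ∈ fsToList '' Γ'.L, w = conv u [(none : Option A)]} := by
      ext w
      constructor
      · rintro ⟨p, ⟨⟨u, v⟩, ⟨hu, hv⟩, rfl⟩, rfl⟩
        obtain rfl : v = z := hv
        exact ⟨fsToList u, ⟨u, hu, rfl⟩, rfl⟩
      · rintro ⟨k, ⟨u, hu, rfl⟩, rfl⟩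
        exact ⟨(fsToList u, fsToList z), ⟨(u, z), ⟨hu, rfl⟩, rfl⟩, rfl⟩
    rw [hset]
    exact hregL'.convOne
      (fun u hu => by obtain ⟨x, -, rfl⟩ := hu; exact fsToList_ne_nil x) (none : Option A)
  refine ⟨Option A, inferInstance, Γ', σ', hinterp, hregL', key Γ.Leq hsyncEq, ?_⟩
  rintro (_ | a)
  · exact hzsync
  · exact key (Γ.Lletter a) (hsyncLet a)
end
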